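/- arXiv:2111.06724 — 2 statements merged into one kernel-verified Lean document; each statement's English description precedes it below -/
import Mathlib

section
/- Let Δ be the Sierpiński triangle of side 1, and suppose ε > 0, 0 < α < 1, c > 0, and f : Δ → ℝ is Lipschitz with constant M and c⁻-Hölder-α on Δ. Then there exists N ∈ ℕ such that for every fixed n ≥ N the following holds: if g : Δ → ℝ satisfies that for every T ∈ τ_n the restriction of g to T ∩ Δ is (c/8)-Hölder-α, and g(x) = f(x) for every x ∈ 𝐕_n, then ‖g − f‖_∞ < ε and g is c⁻-Hölder-α on Δ. -/
/-!
On a level-`n` triangle every point is within `2⁻ⁿ` of a vertex, where `g = f`, so the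
`c/8`-Hölder bound for `g` and the Lipschitz bound for `f` give
`‖g - f‖ ≤ (c/8) 2^(-nα) + M 2^(-n) → 0`.

For the Hölder bound take `x, y` in distinct level-`n` triangles, and let `m` be the point where
the two sub-triangles of their last common ancestor that contain `x` and `y` meet. Projecting on
the edge through `m` separates these sub-triangles, whence `dist x m + dist y m ≤ 2 dist x y`.
Either `m` lies in both level-`n` triangles, and two `c/8`-Hölder steps through `m` give
`|g x - g y| ≤ (c/2) dist x y ^ α`; or one of `x, y` is `2⁻ⁿ`-far from `m`, so
`2⁻ⁿ ≤ 2 dist x y`. Then pass through `f`: `|g x - g y| ≤ 2‖g - f‖ + |f x - f y|`. Below a fixed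
scale `d₀` use the Lipschitz bound: `2‖g - f‖ + M dist x y ≤ (c/2) dist x y ^ α + 5M dist x y`,
and `5M d ≤ (c/4) d ^ α` for `d ≤ d₀`. Above `d₀` use the Hölder constant `c₁ < c` of `f`: for
large `n` the error `2‖g - f‖` is below `(c - c₁)/2 · d₀ ^ α`.
-/

noncomputable section

/-- The plane `ℝ²` with the Euclidean metric. -/
abbrev E2 := EuclideanSpace ℝ (Fin 2)

/-- The point `(x, y)` of the Euclidean plane. -/
def pt (x y : ℝ) : E2 := (WithLp.equiv 2 (Fin 2 → ℝ)).symm ![x, y]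

/-- The three vertices of an equilateral triangle of side length 1. -/
def vtx : Fin 3 → E2 := ![pt 0 0, pt 1 0, pt (1 / 2) (Real.sqrt 3 / 2)]

/-- The homothety of ratio 1/2 centered at the `i`-th vertex. -/
def hmap (i : Fin 3) : E2 → E2 := fun x => AffineMap.homothety (vtx i) (1 / 2 : ℝ) x

/-- Composition of the homotheties along a word; words of length `n` index the
triangles of `τ_n`. -/
def compMap : List (Fin 3) → E2 → E2
  | [], x => x
  | i :: ws, x => hmap i (compMap ws x)

/-- The initial closed equilateral triangle `Δ₀` of side length 1. -/
def Δ0 : Set E2 := convexHull ℝ (Set.range vtx)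

/-- The Sierpiński triangle of side length 1. -/
def Sierp : Set E2 :=
  ⋂ n : ℕ, ⋃ (ws : List (Fin 3)) (_ : ws.length = n), compMap ws '' Δ0

/-- `f` is `c`-Hölder-α on `F`. -/
def HolderCond (c α : ℝ) (F : Set E2) (f : E2 → ℝ) : Prop :=
  ∀ x ∈ F, ∀ y ∈ F, |f x - f y| ≤ c * dist x y ^ α

open Filter Topology
open scoped InnerProductSpace

lemma hmap_sub_hmap (i : Fin 3) (x y : E2) : hmap i x - hmap i y = (1 / 2 : ℝ) • (x - y) := by
  simp only [hmap, AffineMap.homothety_apply, vsub_eq_sub, vadd_eq_add]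
  module

lemma dist_hmap (i : Fin 3) (x y : E2) : dist (hmap i x) (hmap i y) = 1 / 2 * dist x y := by
  rw [dist_eq_norm, hmap_sub_hmap, norm_smul, dist_eq_norm]
  norm_num

lemma hmap_vtx_self (i : Fin 3) : hmap i (vtx i) = vtx i :=
  AffineMap.homothety_apply_same _ _

lemma hmap_vtx_comm (i j : Fin 3) : hmap i (vtx j) = hmap j (vtx i) := by
  simp only [hmap, AffineMap.homothety_apply, vsub_eq_sub, vadd_eq_add]
  module

lemma dist_vtx {i j : Fin 3} (hij : i ≠ j) : dist (vtx i) (vtx j) = 1 := by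
  rw [EuclideanSpace.dist_eq, Real.sqrt_eq_one]
  fin_cases i <;> fin_cases j <;>
    simp_all [vtx, pt, Fin.sum_univ_two, Real.dist_eq, sq_abs, div_pow] <;> norm_num

lemma vtx_mem_Δ0 (i : Fin 3) : vtx i ∈ Δ0 :=
  subset_convexHull ℝ _ (Set.mem_range_self i)

lemma hmap_mem_Δ0 (i : Fin 3) {x : E2} (hx : x ∈ Δ0) : hmap i x ∈ Δ0 := by
  rw [hmap, AffineMap.homothety_eq_lineMap]
  exact (convex_convexHull ℝ _).lineMap_mem (vtx_mem_Δ0 i) hx ⟨by norm_num, by norm_num⟩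

lemma dist_vtx_le_one (k l : Fin 3) : dist (vtx k) (vtx l) ≤ 1 := by
  rcases eq_or_ne k l with rfl | hkl
  · simp
  · exact (dist_vtx hkl).le

lemma dist_le_one_of_mem_Δ0 {a b : E2} (ha : a ∈ Δ0) (hb : b ∈ Δ0) : dist a b ≤ 1 := by
  obtain ⟨_, ⟨k, rfl⟩, hak⟩ := convexHull_exists_dist_ge ha b
  obtain ⟨_, ⟨l, rfl⟩, hbl⟩ := convexHull_exists_dist_ge hb (vtx k)
  rw [dist_comm (vtx k) b] at hak
  linarith [dist_vtx_le_one l k]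

lemma compMap_append (u v : List (Fin 3)) (x : E2) :
    compMap (u ++ v) x = compMap u (compMap v x) := by
  induction u with
  | nil => rfl
  | cons i u ih => exact congrArg (hmap i) ih

lemma dist_compMap (ws : List (Fin 3)) (a b : E2) :
    dist (compMap ws a) (compMap ws b) = (1 / 2) ^ ws.length * dist a b := by
  induction ws with
  | nil => simp [compMap]
  | cons i ws ih =>
    rw [compMap, compMap, dist_hmap, ih, List.length_cons, pow_succ]
    ring

lemma compMap_mem_Δ0 (ws : List (Fin 3)) {x : E2} (hx : x ∈ Δ0) : compMap ws x ∈ Δ0 := by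
  induction ws with
  | nil => exact hx
  | cons i ws ih => exact hmap_mem_Δ0 i ih

def cell (ws : List (Fin 3)) : Set E2 := compMap ws '' Δ0

lemma cell_subset_Δ0 (ws : List (Fin 3)) : cell ws ⊆ Δ0 := by
  rintro _ ⟨x, hx, rfl⟩
  exact compMap_mem_Δ0 ws hx

lemma cell_append (p r : List (Fin 3)) : cell (p ++ r) = compMap p '' cell r := by
  simp only [cell, Set.image_image, compMap_append]

lemma cell_append_subset (p r : List (Fin 3)) : cell (p ++ r) ⊆ cell p := by
  rw [cell_append]
  exact Set.image_mono (cell_subset_Δ0 r)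

lemma cell_singleton (i : Fin 3) : cell [i] = convexHull ℝ (Set.range (hmap i ∘ vtx)) := by
  rw [Set.range_comp]
  exact AffineMap.image_convexHull (AffineMap.homothety (vtx i) (1 / 2 : ℝ)) _

lemma dist_le_of_mem_cell {ws : List (Fin 3)} {x y : E2} (hx : x ∈ cell ws) (hy : y ∈ cell ws) :
    dist x y ≤ (1 / 2) ^ ws.length := by
  obtain ⟨a, ha, rfl⟩ := hx
  obtain ⟨b, hb, rfl⟩ := hy
  rw [dist_compMap]
  exact mul_le_of_le_one_right (by positivity) (dist_le_one_of_mem_Δ0 ha hb)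

lemma pow_le_dist_vtx_of_notMem {j : Fin 3} {ws : List (Fin 3)} (hj : vtx j ∉ cell ws) {z : E2}
    (hz : z ∈ cell ws) : (1 / 2) ^ ws.length ≤ dist z (vtx j) := by
  induction ws generalizing z with
  | nil => exact absurd ⟨vtx j, vtx_mem_Δ0 j, rfl⟩ hj
  | cons l ws ih =>
    obtain ⟨a, ha, rfl⟩ := hz
    rw [List.length_cons, pow_succ']
    rcases eq_or_ne l j with rfl | hlj
    · have hj' : vtx l ∉ cell ws := fun ⟨b, hb, hbl⟩ =>
        hj ⟨b, hb, by rw [compMap, hbl, hmap_vtx_self]⟩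
      calc 1 / 2 * (1 / 2) ^ ws.length ≤ 1 / 2 * dist (compMap ws a) (vtx l) := by
            gcongr; exact ih hj' ⟨a, ha, rfl⟩
        _ = dist (compMap (l :: ws) a) (vtx l) := by
            rw [compMap, ← dist_hmap, hmap_vtx_self]
    · have hnear : dist (compMap (l :: ws) a) (vtx l) ≤ 1 / 2 := by
        rw [compMap, ← hmap_vtx_self l, dist_hmap]
        linarith [dist_le_one_of_mem_Δ0 (compMap_mem_Δ0 ws ha) (vtx_mem_Δ0 l)]
      have hfar := dist_triangle_left (vtx l) (vtx j) (compMap (l :: ws) a)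
      rw [dist_vtx hlj] at hfar
      calc 1 / 2 * (1 / 2) ^ ws.length ≤ 1 / 2 :=
            mul_le_of_le_one_right (by norm_num) (pow_le_one₀ (by norm_num) (by norm_num))
        _ ≤ dist (compMap (l :: ws) a) (vtx j) := by linarith

lemma pow_le_dist_compMap_vtx_of_notMem {j : Fin 3} {p r : List (Fin 3)}
    (hj : compMap p (vtx j) ∉ cell (p ++ r)) {z : E2} (hz : z ∈ cell (p ++ r)) :
    (1 / 2) ^ (p ++ r).length ≤ dist z (compMap p (vtx j)) := by
  rw [cell_append] at hj hz
  obtain ⟨z, hz, rfl⟩ := hz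
  rw [dist_compMap, List.length_append, pow_add]
  exact mul_le_mul_of_nonneg_left (pow_le_dist_vtx_of_notMem (fun h => hj ⟨_, h, rfl⟩) hz)
    (by positivity)

lemma dist_vtx_le_two_mul_inner {i j : Fin 3} (hij : i ≠ j) (l : Fin 3) :
    dist (vtx l) (vtx j) ≤ 2 * ⟪vtx l - vtx j, vtx i - vtx j⟫_ℝ := by
  rcases eq_or_ne l j with rfl | hlj
  · simp
  rcases eq_or_ne l i with rfl | hli
  · rw [real_inner_self_eq_norm_sq, ← dist_eq_norm, dist_vtx hij]
    norm_num
  have hpolar := norm_sub_sq_real (vtx l - vtx j) (vtx i - vtx j)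
  rw [sub_sub_sub_cancel_right, ← dist_eq_norm, ← dist_eq_norm, ← dist_eq_norm, dist_vtx hij,
    dist_vtx hli, dist_vtx hlj] at hpolar
  rw [dist_vtx hlj]
  linarith

-- `cell [i]` lies in the cone at `m` of half-angle 60° around the unit vector `vtx i - vtx j`;
-- the factor 2 is `1 / cos 60°`.
lemma dist_le_two_mul_inner {i j : Fin 3} (hij : i ≠ j) {a : E2} (ha : a ∈ cell [i]) :
    dist a (hmap i (vtx j)) ≤ 2 * ⟪a - hmap i (vtx j), vtx i - vtx j⟫_ℝ := by
  set m := hmap i (vtx j)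
  have hlin : ConcaveOn ℝ Set.univ fun a => 2 * ⟪a - m, vtx i - vtx j⟫_ℝ := by
    refine ⟨convex_univ, fun x _ y _ s t _ _ hst => le_of_eq ?_⟩
    simp only [smul_eq_mul, inner_sub_left, inner_add_left, real_inner_smul_left]
    linear_combination (-2 * ⟪m, vtx i - vtx j⟫_ℝ) * hst
  rw [cell_singleton] at ha
  obtain ⟨_, ⟨l, rfl⟩, hl⟩ :=
    ((convexOn_dist m convex_univ).sub hlin).exists_ge_of_mem_convexHull (Set.subset_univ _) ha
  simp only [Pi.sub_apply, Function.comp, m, dist_hmap, hmap_sub_hmap, real_inner_smul_left] at hl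
  linarith [dist_vtx_le_two_mul_inner hij l]

lemma dist_add_dist_le_two_mul_dist {i j : Fin 3} (hij : i ≠ j) {a b : E2} (ha : a ∈ cell [i])
    (hb : b ∈ cell [j]) :
    dist a (hmap i (vtx j)) + dist b (hmap i (vtx j)) ≤ 2 * dist a b := by
  have hb' := dist_le_two_mul_inner hij.symm hb
  rw [← hmap_vtx_comm] at hb'
  have hcs := real_inner_le_norm (a - b) (vtx i - vtx j)
  rw [← dist_eq_norm, ← dist_eq_norm, dist_vtx hij, mul_one] at hcs
  have hsplit : ⟪a - b, vtx i - vtx j⟫_ℝ = ⟪a - hmap i (vtx j), vtx i - vtx j⟫_ℝ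
      + ⟪b - hmap i (vtx j), vtx j - vtx i⟫_ℝ := by
    rw [← neg_sub (vtx i), inner_neg_right, ← sub_eq_add_neg, ← inner_sub_left,
      sub_sub_sub_cancel_right]
  linarith [dist_le_two_mul_inner hij ha]

lemma dist_add_dist_compMap_le {w : List (Fin 3)} {i j : Fin 3} (hij : i ≠ j) {x y : E2}
    (hx : x ∈ cell (w ++ [i])) (hy : y ∈ cell (w ++ [j])) :
    dist x (compMap w (hmap i (vtx j))) + dist y (compMap w (hmap i (vtx j))) ≤ 2 * dist x y := by
  rw [cell_append] at hx hy
  obtain ⟨a, ha, rfl⟩ := hx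
  obtain ⟨b, hb, rfl⟩ := hy
  rw [dist_compMap, dist_compMap, dist_compMap, ← mul_add, mul_left_comm]
  exact mul_le_mul_of_nonneg_left (dist_add_dist_le_two_mul_dist hij ha hb) (by positivity)

lemma compMap_replicate (k : ℕ) (j : Fin 3) : compMap (List.replicate k j) (vtx j) = vtx j := by
  induction k with
  | zero => rfl
  | succ k ih => rw [List.replicate_succ, compMap, ih, hmap_vtx_self]

lemma exists_mem_cell_of_mem_Sierp {x : E2} (hx : x ∈ Sierp) (n : ℕ) :
    ∃ ws : List (Fin 3), ws.length = n ∧ x ∈ cell ws := by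
  simpa [Sierp, cell] using Set.mem_iInter.1 hx n

lemma compMap_vtx_mem_Sierp (ws : List (Fin 3)) (j : Fin 3) : compMap ws (vtx j) ∈ Sierp := by
  refine Set.mem_iInter.2 fun n => Set.mem_iUnion₂.2 ?_
  set L := ws ++ List.replicate n j
  have hsplit : compMap ws (vtx j) = compMap (L.take n) (compMap (L.drop n) (vtx j)) := by
    rw [← compMap_append, List.take_append_drop, compMap_append, compMap_replicate]
  exact ⟨L.take n, by simp [L], _, compMap_mem_Δ0 _ (vtx_mem_Δ0 j), hsplit.symm⟩

lemma vtx_mem_Sierp (j : Fin 3) : vtx j ∈ Sierp :=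
  compMap_vtx_mem_Sierp [] j

lemma List.eq_or_exists_append_cons_of_length_eq {α : Type*} :
    ∀ {u v : List α}, u.length = v.length →
      u = v ∨ ∃ (w : List α) (i j : α) (ru rv : List α),
        i ≠ j ∧ u = w ++ i :: ru ∧ v = w ++ j :: rv
  | [], [], _ => Or.inl rfl
  | i :: u, j :: v, h => by
    rcases eq_or_ne i j with rfl | hij
    · rcases eq_or_exists_append_cons_of_length_eq (Nat.succ.inj h) with
        rfl | ⟨w, k, l, ru, rv, hkl, rfl, rfl⟩
      · exact Or.inl rfl
      · exact Or.inr ⟨i :: w, k, l, ru, rv, hkl, rfl, rfl⟩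
    · exact Or.inr ⟨[], i, j, u, v, hij, rfl, rfl⟩

lemma exists_shared_point_or_pow_le {u v : List (Fin 3)} (huv : u.length = v.length) {x y : E2}
    (hx : x ∈ cell u) (hy : y ∈ cell v) (hyS : y ∈ Sierp) :
    (∃ m ∈ Sierp, m ∈ cell u ∧ m ∈ cell v ∧ dist x m ≤ 2 * dist x y ∧ dist m y ≤ 2 * dist x y) ∨
      (1 / 2) ^ u.length ≤ 2 * dist x y := by
  rcases List.eq_or_exists_append_cons_of_length_eq huv with
    rfl | ⟨w, i, j, ru, rv, hij, rfl, rfl⟩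
  · exact Or.inl ⟨y, hyS, hy, hy, by linarith [dist_nonneg (x := x) (y := y)], by simp⟩
  simp only [List.append_cons w i ru, List.append_cons w j rv] at hx hy huv ⊢
  set m := compMap w (hmap i (vtx j))
  have hmi : compMap (w ++ [i]) (vtx j) = m := compMap_append _ _ _
  have hmj : compMap (w ++ [j]) (vtx i) = m := by
    rw [compMap_append, compMap, compMap, hmap_vtx_comm]
  have hcone :=
    dist_add_dist_compMap_le hij (cell_append_subset _ _ hx) (cell_append_subset _ _ hy)
  have hd := dist_nonneg (x := x) (y := m)
  have hd' := dist_nonneg (x := y) (y := m)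
  by_cases hshared : m ∈ cell (w ++ [i] ++ ru) ∧ m ∈ cell (w ++ [j] ++ rv)
  · refine Or.inl ⟨m, hmi ▸ compMap_vtx_mem_Sierp _ _, hshared.1, hshared.2, by linarith, ?_⟩
    rw [dist_comm]
    linarith
  rcases not_and_or.1 hshared with hnot | hnot
  · rw [← hmi] at hnot
    have := pow_le_dist_compMap_vtx_of_notMem hnot hx
    rw [hmi] at this
    exact Or.inr (by linarith)
  · rw [← hmj] at hnot
    have := pow_le_dist_compMap_vtx_of_notMem hnot hy
    rw [hmj, ← huv] at this
    exact Or.inr (by linarith)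

lemma HolderCond.mono {c c' α : ℝ} {F : Set E2} {f : E2 → ℝ} (hf : HolderCond c α F f)
    (hcc' : c ≤ c') : HolderCond c' α F f := fun x hx y hy =>
  (hf x hx y hy).trans (by gcongr)

lemma rpow_le_two_mul_rpow {a d α : ℝ} (ha : 0 ≤ a) (had : a ≤ 2 * d) (hα0 : 0 ≤ α)
    (hα1 : α ≤ 1) : a ^ α ≤ 2 * d ^ α :=
  calc a ^ α ≤ (2 * d) ^ α := Real.rpow_le_rpow ha had hα0
    _ = 2 ^ α * d ^ α := Real.mul_rpow zero_le_two (by linarith)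
    _ ≤ 2 * d ^ α := by
      gcongr
      · exact Real.rpow_nonneg (by linarith) _
      · exact Real.rpow_le_self_of_one_le one_le_two hα1

lemma exists_pos_forall_mul_le_mul_rpow {K ε α : ℝ} (hK : 0 ≤ K) (hε : 0 < ε) (hα : α < 1) :
    ∃ d₀ > 0, ∀ d, 0 ≤ d → d ≤ d₀ → K * d ≤ ε * d ^ α := by
  have hβ : 0 < 1 - α := by linarith
  refine ⟨(ε / (K + 1)) ^ (1 - α)⁻¹, by positivity, fun d hd hdd₀ => ?_⟩
  have hpow : d ^ (1 - α) ≤ ε / (K + 1) :=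
    calc d ^ (1 - α) ≤ ((ε / (K + 1)) ^ (1 - α)⁻¹) ^ (1 - α) := Real.rpow_le_rpow hd hdd₀ hβ.le
      _ = ε / (K + 1) := Real.rpow_inv_rpow (by positivity) hβ.ne'
  have hKε : K * (ε / (K + 1)) ≤ ε := by
    rw [mul_div_assoc', div_le_iff₀ (by positivity)]
    nlinarith
  calc K * d = K * d ^ (1 - α) * d ^ α := by
        rw [mul_assoc, ← Real.rpow_add' hd (by norm_num), sub_add_cancel, Real.rpow_one]
    _ ≤ K * (ε / (K + 1)) * d ^ α := by gcongr
    _ ≤ ε * d ^ α := by gcongr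

/-- The bound on `|g - f|` over a level-`n` triangle: a `c/8`-Hölder step of `g` to a vertex,
where `g = f`, then an `M`-Lipschitz step of `f` back. -/
def meshDeviation (c M α : ℝ) (n : ℕ) : ℝ := c / 8 * ((1 / 2) ^ n) ^ α + M * (1 / 2) ^ n

lemma tendsto_meshDeviation {α : ℝ} (hα : 0 < α) (c M : ℝ) :
    Tendsto (meshDeviation c M α) atTop (𝓝 0) := by
  have hP : Tendsto (fun n : ℕ => (1 / 2 : ℝ) ^ n) atTop (𝓝 0) :=
    tendsto_pow_atTop_nhds_zero_of_lt_one (by norm_num) (by norm_num)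
  have hPα : Tendsto (fun n : ℕ => ((1 / 2 : ℝ) ^ n) ^ α) atTop (𝓝 0) := by
    have := (Real.continuousAt_rpow_const 0 α (Or.inr hα.le)).tendsto.comp hP
    rwa [Real.zero_rpow hα.ne'] at this
  have := (hPα.const_mul (c / 8)).add (hP.const_mul M)
  rwa [mul_zero, mul_zero, add_zero] at this

section Gluing

variable {α c M : ℝ} {f g : E2 → ℝ} {n : ℕ}

lemma abs_sub_le_meshDeviation (hα : 0 ≤ α) (hc : 0 ≤ c) (hM : 0 ≤ M)
    (hg : ∀ ws : List (Fin 3), ws.length = n → HolderCond (c / 8) α (cell ws ∩ Sierp) g)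
    (hgf : ∀ ws : List (Fin 3), ws.length = n → ∀ i : Fin 3,
      g (compMap ws (vtx i)) = f (compMap ws (vtx i)))
    (hfLip : ∀ x ∈ Sierp, ∀ y ∈ Sierp, |f x - f y| ≤ M * dist x y) {x : E2} (hx : x ∈ Sierp) :
    |g x - f x| ≤ meshDeviation c M α n := by
  obtain ⟨ws, rfl, hxw⟩ := exists_mem_cell_of_mem_Sierp hx n
  set v := compMap ws (vtx 0)
  have hvS : v ∈ Sierp := compMap_vtx_mem_Sierp ws 0
  have hxv : dist x v ≤ (1 / 2) ^ ws.length :=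
    dist_le_of_mem_cell hxw ⟨vtx 0, vtx_mem_Δ0 0, rfl⟩
  have hv : g v = f v := hgf ws rfl 0
  have hgv := hg ws rfl x ⟨hxw, hx⟩ v ⟨⟨vtx 0, vtx_mem_Δ0 0, rfl⟩, hvS⟩
  have hfv := hfLip v hvS x hx
  rw [dist_comm] at hfv
  calc |g x - f x| = |(g x - g v) + (f v - f x)| := by rw [hv]; congr 1; ring
    _ ≤ c / 8 * dist x v ^ α + M * dist x v := (abs_add_le _ _).trans (add_le_add hgv hfv)
    _ ≤ meshDeviation c M α ws.length := by
      unfold meshDeviation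
      gcongr

lemma abs_sub_le_or_pow_le (hα0 : 0 ≤ α) (hα1 : α ≤ 1) (hc : 0 ≤ c)
    (hg : ∀ ws : List (Fin 3), ws.length = n → HolderCond (c / 8) α (cell ws ∩ Sierp) g)
    {x y : E2} (hx : x ∈ Sierp) (hy : y ∈ Sierp) :
    |g x - g y| ≤ c / 2 * dist x y ^ α ∨ (1 / 2) ^ n ≤ 2 * dist x y := by
  obtain ⟨u, rfl, hxu⟩ := exists_mem_cell_of_mem_Sierp hx n
  obtain ⟨v, huv, hyv⟩ := exists_mem_cell_of_mem_Sierp hy u.length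
  refine (exists_shared_point_or_pow_le huv.symm hxu hyv hy).imp_left ?_
  rintro ⟨m, hmS, hmu, hmv, hxm, hmy⟩
  have h1 := hg u rfl x ⟨hxu, hx⟩ m ⟨hmu, hmS⟩
  have h2 := hg v huv m ⟨hmv, hmS⟩ y ⟨hyv, hy⟩
  have h1' := rpow_le_two_mul_rpow dist_nonneg hxm hα0 hα1
  have h2' := rpow_le_two_mul_rpow dist_nonneg hmy hα0 hα1
  calc |g x - g y| ≤ |g x - g m| + |g m - g y| := abs_sub_le _ _ _
    _ ≤ c / 8 * (2 * dist x y ^ α) + c / 8 * (2 * dist x y ^ α) :=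
      add_le_add (h1.trans (by gcongr)) (h2.trans (by gcongr))
    _ = c / 2 * dist x y ^ α := by ring

lemma holderCond_of_abs_sub_le_meshDeviation {c₁ c₂ d₀ : ℝ} (hα0 : 0 < α) (hα1 : α ≤ 1)
    (hc : 0 ≤ c) (hM : 0 ≤ M) (hd₀ : 0 ≤ d₀)
    (hg : ∀ ws : List (Fin 3), ws.length = n → HolderCond (c / 8) α (cell ws ∩ Sierp) g)
    (hfHol : HolderCond c₁ α Sierp f)
    (hfLip : ∀ x ∈ Sierp, ∀ y ∈ Sierp, |f x - f y| ≤ M * dist x y)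
    (hdev : ∀ x ∈ Sierp, |g x - f x| ≤ meshDeviation c M α n)
    (hsmall : ∀ d, 0 ≤ d → d ≤ d₀ → 5 * M * d ≤ c / 4 * d ^ α)
    (hfar : 2 * meshDeviation c M α n ≤ (c₂ - c₁) * d₀ ^ α)
    (hc₁₂ : c₁ ≤ c₂) (hc₂ : 3 * c / 4 ≤ c₂) : HolderCond c₂ α Sierp g := by
  intro x hx y hy
  have hdα : 0 ≤ dist x y ^ α := Real.rpow_nonneg dist_nonneg _
  have hviaf : |g x - g y| ≤ 2 * meshDeviation c M α n + |f x - f y| := by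
    calc |g x - g y| = |(g x - f x) + (f x - f y) + (f y - g y)| := by congr 1; ring
      _ ≤ |g x - f x| + |f x - f y| + |f y - g y| := abs_add_three _ _ _
      _ ≤ _ := by rw [abs_sub_comm (f y)]; linarith [hdev x hx, hdev y hy]
  rcases le_or_gt d₀ (dist x y) with hfar' | hnear
  · calc |g x - g y| ≤ (c₂ - c₁) * d₀ ^ α + c₁ * dist x y ^ α := by
          linarith [hfHol x hx y hy]
      _ ≤ (c₂ - c₁) * dist x y ^ α + c₁ * dist x y ^ α := by
          gcongr
      _ = c₂ * dist x y ^ α := by ring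
  rcases abs_sub_le_or_pow_le hα0.le hα1 hc hg hx hy with hshared | hmesh
  · exact hshared.trans (by gcongr; linarith)
  have hPα := rpow_le_two_mul_rpow (by positivity) hmesh hα0.le hα1
  have hLip := hsmall _ dist_nonneg hnear.le
  unfold meshDeviation at hviaf
  calc |g x - g y| ≤ c / 4 * ((1 / 2) ^ n) ^ α + 2 * M * (1 / 2) ^ n + M * dist x y := by
        linarith [hfLip x hx y hy]
    _ ≤ c / 4 * (2 * dist x y ^ α) + 2 * M * (2 * dist x y) + M * dist x y := by gcongr
    _ ≤ c₂ * dist x y ^ α := by nlinarith [mul_le_mul_of_nonneg_right hc₂ hdα]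

end Gluing

/-- Suppose `ε > 0`, `0 < α < 1`, `c > 0` and `f : Δ → ℝ` is
Lipschitz with constant `M` and `c⁻`-Hölder-α on `Δ`. Then there is `N` such that
for every `n ≥ N`: if `g` is `(c/8)`-Hölder-α on `T ∩ Δ` for every triangle
`T ∈ τ_n` and `g = f` on the vertex set `𝐕_n`, then `‖g − f‖_∞ < ε` and `g` is
`c⁻`-Hölder-α on `Δ`. -/
theorem stmt3 (ε : ℝ) (hε : 0 < ε) (α : ℝ) (hα0 : 0 < α) (hα1 : α < 1)
    (c : ℝ) (hc : 0 < c) (M : ℝ) (f : E2 → ℝ)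
    (hfLip : ∀ x ∈ Sierp, ∀ y ∈ Sierp, |f x - f y| ≤ M * dist x y)
    (hfHol : ∃ c' < c, HolderCond c' α Sierp f) :
    ∃ N : ℕ, ∀ n : ℕ, N ≤ n → ∀ g : E2 → ℝ,
      (∀ ws : List (Fin 3), ws.length = n →
        HolderCond (c / 8) α ((compMap ws '' Δ0) ∩ Sierp) g) →
      (∀ ws : List (Fin 3), ws.length = n → ∀ i : Fin 3,
        g (compMap ws (vtx i)) = f (compMap ws (vtx i))) →
      sSup ((fun x => |g x - f x|) '' Sierp) < ε ∧ ∃ c' < c, HolderCond c' α Sierp g := by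
  obtain ⟨c₁, hc₁, hc₁c, hf⟩ : ∃ c₁, c / 2 ≤ c₁ ∧ c₁ < c ∧ HolderCond c₁ α Sierp f := by
    obtain ⟨c', hc'c, hf⟩ := hfHol
    exact ⟨max c' (c / 2), le_max_right _ _, max_lt hc'c (by linarith), hf.mono (le_max_left _ _)⟩
  have hM : 0 ≤ M := by
    have h01 := hfLip _ (vtx_mem_Sierp 0) _ (vtx_mem_Sierp 1)
    rw [dist_vtx (by decide), mul_one] at h01
    exact (abs_nonneg _).trans h01
  obtain ⟨d₀, hd₀, hsmall⟩ :=
    exists_pos_forall_mul_le_mul_rpow (by positivity : 0 ≤ 5 * M) (by positivity : 0 < c / 4) hα1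
  have hlim := tendsto_meshDeviation hα0 c M
  have hgap : 0 < (c - c₁) / 4 * d₀ ^ α := by
    have := sub_pos.2 hc₁c
    positivity
  obtain ⟨N, hN⟩ := eventually_atTop.1
    ((hlim.eventually (gt_mem_nhds hε)).and (hlim.eventually (gt_mem_nhds hgap)))
  refine ⟨N, fun n hn g hg hgf => ?_⟩
  obtain ⟨hnε, hngap⟩ := hN n hn
  have hdev := fun x (hx : x ∈ Sierp) => abs_sub_le_meshDeviation hα0.le hc.le hM hg hgf hfLip hx
  refine ⟨?_, (c + c₁) / 2, by linarith, ?_⟩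
  · refine (Real.sSup_le (Set.forall_mem_image.2 hdev) ?_).trans_lt hnε
    unfold meshDeviation
    positivity
  · exact holderCond_of_abs_sub_le_meshDeviation hα0 hα1.le hc.le hM hd₀.le hg hf hfLip hdev
      hsmall (by linarith) (by linarith) (by linarith)
end
end

section
/- Let F be the attractor of a bi-Lipschitz iterated function system f₁, …, f_m on ℝ^p satisfying the strong separation condition (each f_i satisfies ν_i|x−y| ≤ |f_i(x) − f_i(y)| ≤ ρ_i|x−y| with 0 < ν_i, ρ_i < 1, and the sets f_i(F) are pairwise disjoint). Then there exists α₀ > 0 such that for every 0 < α < α₀ there is a dense Gδ subset 𝒢 of C₁^α(F) on which λ(f(F)) = 0 for every f ∈ 𝒢, and D_*(α, F) = 0. -/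
/-!
Finite-range functions are dense in `C₁^α(F)`. Cut `F` into its level-`k` cells, of diameter
`σ ≲ ρ ^ k` and at mutual distance `γ ≳ ν ^ k`. Shrink a Hölder function `h` by a factor `1 - η`
and replace it by the smallest majorant, constant on cells, that is Lipschitz for the cell
weights `(cell distance) ^ α`. Along a path of cells the error is governed by `(2 σ n) ^ α`
against `n γ ^ α`, and since `ρ < ν ^ α` the ratio `σ / γ ^ α` tends to `0`, so the majorant is
uniformly close to `h` and still 1-Hölder-`α`.

Functions with Lebesgue-null range therefore form a dense set, and it is a Gδ because
`volume (range g) < ε` is an open condition. On it `D_*^f(F) = 0`; by Baire every dense Gδ meets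
it, so each infimum in the definition of `D_*(α, F)` is `0`.
-/

open MeasureTheory

noncomputable section

/-- `C₁^α(F)`: the set of 1-Hölder-α functions `F → ℝ`, as a subset of the bounded
continuous functions on `F` (which carry the supremum metric). -/
def HolderBall (α : ℝ) {p : ℕ} (F : Set (EuclideanSpace ℝ (Fin p))) :
    Set (BoundedContinuousFunction ↥F ℝ) :=
  {f | ∀ x y : ↥F,
    |f x - f y| ≤ dist (x : EuclideanSpace ℝ (Fin p)) (y : EuclideanSpace ℝ (Fin p)) ^ α}

/-- `D_*^f(F) = sup {d : λ{r : dim_H (f⁻¹(r)) ≥ d} > 0}`. -/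
def DstarF {p : ℕ} (F : Set (EuclideanSpace ℝ (Fin p))) (f : ↥F → ℝ) : ℝ :=
  sSup {d : ℝ | 0 < volume {r : ℝ | ENNReal.ofReal d ≤ dimH (Subtype.val '' (f ⁻¹' {r}))}}

/-- `D_*(α, F)`: the supremum over all dense Gδ subsets `G` of `C₁^α(F)` of
`inf {D_*^f(F) : f ∈ G}`. -/
def DStar {p : ℕ} (α : ℝ) (F : Set (EuclideanSpace ℝ (Fin p))) : ℝ :=
  sSup {d : ℝ | ∃ G : Set ↥(HolderBall α F), Dense G ∧ IsGδ G ∧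
    d = sInf ((fun g : ↥(HolderBall α F) =>
      DstarF F ⇑(g : BoundedContinuousFunction ↥F ℝ)) '' G)}

open Set Filter Topology Function

section DimensionProfile

variable {p : ℕ} {F : Set (EuclideanSpace ℝ (Fin p))}

lemma dstarF_nonneg (g : F → ℝ) : 0 ≤ DstarF F g :=
  Real.sSup_nonneg' ⟨0, by simp, le_rfl⟩

lemma dstarF_eq_zero_of_volume_range_eq_zero (g : F → ℝ) (hg : volume (range g) = 0) :
    DstarF F g = 0 := by
  refine le_antisymm (Real.sSup_nonpos fun d hd => ?_) (dstarF_nonneg g)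
  by_contra! hd0
  have hsub : {r : ℝ | ENNReal.ofReal d ≤ dimH (Subtype.val '' (g ⁻¹' {r}))} ⊆ range g := by
    intro r hr
    obtain ⟨x, hx⟩ := (g ⁻¹' {r}).eq_empty_or_nonempty.resolve_left fun he => by
      simp [he] at hr
      linarith
    exact ⟨x, hx⟩
  rw [mem_ofPred_eq, measure_mono_null hsub hg] at hd
  exact lt_irrefl _ hd

end DimensionProfile

lemma isClosed_holderBall (α : ℝ) {p : ℕ} (F : Set (EuclideanSpace ℝ (Fin p))) :
    IsClosed (HolderBall α F) := by
  simp only [HolderBall, ofPred_forall]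
  exact isClosed_iInter fun x => isClosed_iInter fun y =>
    isClosed_le ((continuous_eval_const x).sub (continuous_eval_const y)).abs continuous_const

lemma zero_mem_holderBall (α : ℝ) {p : ℕ} (F : Set (EuclideanSpace ℝ (Fin p))) :
    0 ∈ HolderBall α F := fun _ _ => by
  simpa using Real.rpow_nonneg dist_nonneg α

section NullRange

open BoundedContinuousFunction

variable {X : Type*} [TopologicalSpace X] [CompactSpace X]

lemma isOpen_setOf_volume_range_lt (r : ENNReal) :
    IsOpen {g : X →ᵇ ℝ | volume (range g) < r} := by
  refine Metric.isOpen_iff.2 fun g₀ hg₀ => ?_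
  have hK : IsCompact (range g₀) := isCompact_range g₀.continuous
  obtain ⟨δ, hδ, hδr⟩ := ((tendsto_measure_cthickening_of_isCompact hK).eventually_lt_const
    hg₀).exists_gt
  refine ⟨δ, hδ, fun g hg => (measure_mono ?_).trans_lt hδr⟩
  rintro _ ⟨x, rfl⟩
  exact Metric.mem_cthickening_of_dist_le _ _ _ _ ⟨x, rfl⟩
    ((dist_coe_le_dist x).trans (Metric.mem_ball.1 hg).le)

lemma isGδ_setOf_volume_range_eq_zero : IsGδ {g : X →ᵇ ℝ | volume (range g) = 0} := by
  have h : {g : X →ᵇ ℝ | volume (range g) = 0} =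
      ⋂ n : ℕ, {g : X →ᵇ ℝ | volume (range g) < (n : ENNReal)⁻¹} := by
    ext g
    simp only [mem_ofPred_eq, mem_iInter]
    refine ⟨fun h n => h ▸ ENNReal.inv_pos.2 (ENNReal.natCast_ne_top n), fun h => ?_⟩
    by_contra hne
    obtain ⟨n, hn⟩ := ENNReal.exists_inv_nat_lt hne
    exact (h n).not_gt hn
  rw [h]
  exact .iInter_of_isOpen fun n => isOpen_setOf_volume_range_lt _

end NullRange

lemma dStar_eq_zero_of_dense_isGδ {α : ℝ} {p : ℕ} {F : Set (EuclideanSpace ℝ (Fin p))}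
    {G₀ : Set (HolderBall α F)} (hd : Dense G₀) (hG : IsGδ G₀)
    (h0 : ∀ g ∈ G₀, DstarF F ⇑(g : BoundedContinuousFunction F ℝ) = 0) : DStar α F = 0 := by
  have : CompleteSpace (HolderBall α F) := (isClosed_holderBall α F).completeSpace_coe
  have : Nonempty (HolderBall α F) := ⟨⟨0, zero_mem_holderBall α F⟩⟩
  have hinf : ∀ G : Set (HolderBall α F), Dense G → IsGδ G →
      sInf ((fun g : HolderBall α F => DstarF F ⇑(g : BoundedContinuousFunction F ℝ)) '' G)
        = 0 := by
    intro G hGd hGδ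
    obtain ⟨g, hgG, hg₀⟩ := (hGd.inter_of_Gδ hGδ hG hd).nonempty
    have hbdd : ∀ y ∈ (fun g : HolderBall α F => DstarF F ⇑(g : BoundedContinuousFunction F ℝ))
        '' G, 0 ≤ y := by
      rintro _ ⟨g, -, rfl⟩
      exact dstarF_nonneg _
    refine le_antisymm ?_ (Real.sInf_nonneg hbdd)
    exact (csInf_le ⟨0, hbdd⟩ (mem_image_of_mem _ hgG)).trans_eq (h0 g hg₀)
  have hset : {d : ℝ | ∃ G : Set (HolderBall α F), Dense G ∧ IsGδ G ∧
      d = sInf ((fun g : HolderBall α F => DstarF F ⇑(g : BoundedContinuousFunction F ℝ)) '' G)}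
      = {0} := by
    ext d
    refine ⟨fun ⟨G, hGd, hGδ, hdG⟩ => hdG.trans (hinf G hGd hGδ), fun hd0 => ?_⟩
    exact ⟨G₀, hd, hG, (mem_singleton_iff.1 hd0).trans (hinf G₀ hd hG).symm⟩
  rw [DStar, hset, csSup_singleton]

/-- Young's inequality `x ^ α * y ^ (1 - α) ≤ α x + (1 - α) y`, with `x = t n` and
`y = (s / t) ^ (α / (1 - α))`. -/
lemma rpow_mul_le_add_mul {α s t K n : ℝ} (hα0 : 0 < α) (hα1 : α < 1) (hs : 0 ≤ s) (ht : 0 < t)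
    (hK : (s / t) ^ (α / (1 - α)) ≤ K) (hn : 0 ≤ n) : (s * n) ^ α ≤ K + t * n := by
  have hst : 0 ≤ s / t := div_nonneg hs ht.le
  have htn : 0 ≤ t * n := mul_nonneg ht.le hn
  set y := (s / t) ^ (α / (1 - α))
  have hy : 0 ≤ y := Real.rpow_nonneg hst _
  have hpow : (s / t) ^ α = y ^ (1 - α) := by
    rw [← Real.rpow_mul hst, div_mul_cancel₀ _ (sub_ne_zero.2 hα1.ne')]
  have hyoung := Real.geom_mean_le_arith_mean2_weighted hα0.le (sub_nonneg.2 hα1.le) htn hy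
    (add_sub_cancel α 1)
  calc (s * n) ^ α = (t * n) ^ α * y ^ (1 - α) := by
        rw [← hpow, ← Real.mul_rpow htn hst]
        congr 1
        field_simp
    _ ≤ α * (t * n) + (1 - α) * y := hyoung
    _ ≤ K + t * n := by nlinarith

lemma rpow_sum_le_sum_rpow {ι : Type*} (s : Finset ι) {x : ι → ℝ} (hx : ∀ i ∈ s, 0 ≤ x i)
    {α : ℝ} (hα0 : 0 < α) (hα1 : α ≤ 1) : (∑ i ∈ s, x i) ^ α ≤ ∑ i ∈ s, x i ^ α :=
  Finset.le_sum_of_subadditive_on_pred (· ^ α) (0 ≤ ·) (Real.zero_rpow hα0.ne').le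
    (fun _ _ ha hb => Real.rpow_add_le_add_rpow ha hb hα0.le hα1)
    (fun _ _ => add_nonneg) x hx

/-- `v C` is the supremum, over paths starting at `C`, of `a` at the end of the path minus the
`w`-length of the path. -/
lemma exists_majorant_of_path_bound {τ : Type*} (w : τ → τ → ℝ) (a : τ → ℝ) {K : ℝ}
    (h : ∀ (p : ℕ → τ) (n : ℕ),
      a (p n) - ∑ i ∈ Finset.range n, w (p i) (p (i + 1)) ≤ a (p 0) + K) :
    ∃ v : τ → ℝ, (∀ C, a C ≤ v C ∧ v C ≤ a C + K) ∧ ∀ C C', v C' ≤ v C + w C C' := by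
  let S : τ → Set ℝ := fun C =>
    {y | ∃ (p : ℕ → τ) (n : ℕ), p 0 = C ∧ y = a (p n) - ∑ i ∈ Finset.range n, w (p i) (p (i + 1))}
  have hmem : ∀ C, a C ∈ S C := fun C => ⟨fun _ => C, 0, rfl, by simp⟩
  have hle : ∀ C, ∀ y ∈ S C, y ≤ a C + K := by
    rintro _ _ ⟨p, n, rfl, rfl⟩
    exact h p n
  refine ⟨fun C => sSup (S C), fun C => ⟨le_csSup ⟨_, hle C⟩ (hmem C),
    csSup_le ⟨_, hmem C⟩ (hle C)⟩, fun C C' => ?_⟩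
  refine csSup_le ⟨_, hmem C'⟩ ?_
  rintro _ ⟨p, n, rfl, rfl⟩
  let q : ℕ → τ := fun | 0 => C | i + 1 => p i
  have hq : a (p n) - ∑ i ∈ Finset.range n, w (p i) (p (i + 1)) - w C (p 0) ∈ S C := by
    refine ⟨q, n + 1, rfl, ?_⟩
    rw [Finset.sum_range_succ']
    simp only [q]
    ring
  linarith [le_csSup ⟨_, hle C⟩ hq]

section CoarsePartition

variable {X τ : Type*} [PseudoMetricSpace X] {code : X → τ}

def cellDist (code : X → τ) (C C' : τ) : ℝ :=
  sInf {d | ∃ x y, code x = C ∧ code y = C' ∧ dist x y = d}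

lemma cellDist_nonneg (C C' : τ) : 0 ≤ cellDist code C C' :=
  Real.sInf_nonneg <| by rintro _ ⟨x, y, -, -, rfl⟩; exact dist_nonneg

lemma cellDist_le_dist (x y : X) : cellDist code (code x) (code y) ≤ dist x y :=
  csInf_le ⟨0, by rintro _ ⟨x, y, -, -, rfl⟩; exact dist_nonneg⟩ ⟨x, y, rfl, rfl, rfl⟩

lemma le_cellDist (hcode : Surjective code) {C C' : τ} {c : ℝ}
    (h : ∀ x y, code x = C → code y = C' → c ≤ dist x y) : c ≤ cellDist code C C' := by
  obtain ⟨x, rfl⟩ := hcode C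
  obtain ⟨y, rfl⟩ := hcode C'
  exact le_csInf ⟨_, x, y, rfl, rfl, rfl⟩ <| by rintro _ ⟨x, y, hx, hy, rfl⟩; exact h x y hx hy

section Jump

variable [DecidableEq τ] {σ : ℝ}

def cellJump (C C' : τ) : ℝ := if C = C' then 0 else 1

lemma dist_le_cellDist_add (hcode : Surjective code)
    (hdiam : ∀ x y, code x = code y → dist x y ≤ σ) {rep : τ → X}
    (hrep : ∀ C, code (rep C) = C) (C C' : τ) :
    dist (rep C) (rep C') ≤ cellDist code C C' + 2 * σ * cellJump C C' := by
  by_cases hCC : C = C'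
  · simp [hCC, cellJump, cellDist_nonneg]
  simp only [cellJump, hCC, if_false, mul_one]
  suffices dist (rep C) (rep C') - 2 * σ ≤ cellDist code C C' by linarith
  refine le_cellDist hcode fun x y hx hy => ?_
  have h1 := hdiam (rep C) x (by rw [hrep, hx])
  have h2 := hdiam y (rep C') (by rw [hrep, hy])
  linarith [dist_triangle4 (rep C) x y (rep C')]

lemma rpow_mul_jump_le_cellDist (hcode : Surjective code) {γ α : ℝ} (hγ : 0 ≤ γ)
    (hα : 0 ≤ α) (hgap : ∀ x y, code x ≠ code y → γ ≤ dist x y) (C C' : τ) :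
    γ ^ α * cellJump C C' ≤ cellDist code C C' ^ α := by
  by_cases hCC : C = C'
  · simpa [hCC, cellJump] using Real.rpow_nonneg (cellDist_nonneg _ _) α
  simp only [cellJump, hCC, if_false, mul_one]
  exact Real.rpow_le_rpow hγ (le_cellDist hcode fun x y hx hy => hgap x y (hx ▸ hy ▸ hCC)) hα

end Jump

variable {σ α γ η K : ℝ}

lemma path_bound_of_holder (hcode : Surjective code) (hα0 : 0 < α) (hα1 : α < 1)
    (hσ : 0 ≤ σ) (hγ : 0 < γ) (hη0 : 0 < η) (hη1 : η ≤ 1)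
    (hdiam : ∀ x y, code x = code y → dist x y ≤ σ)
    (hgap : ∀ x y, code x ≠ code y → γ ≤ dist x y)
    (hsmall : (2 * σ / (η * γ ^ α)) ^ (α / (1 - α)) ≤ K)
    {h : X → ℝ} (hh : ∀ x y, |h x - h y| ≤ dist x y ^ α)
    {rep : τ → X} (hrep : ∀ C, code (rep C) = C) (p : ℕ → τ) (n : ℕ) :
    (1 - η) * h (rep (p n)) - ∑ i ∈ Finset.range n, cellDist code (p i) (p (i + 1)) ^ α
      ≤ (1 - η) * h (rep (p 0)) + K := by
  classical
  set W := ∑ i ∈ Finset.range n, cellDist code (p i) (p (i + 1)) ^ α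
  set J := ∑ i ∈ Finset.range n, cellJump (p i) (p (i + 1))
  have hJ : 0 ≤ J := Finset.sum_nonneg fun i _ => by unfold cellJump; split_ifs <;> norm_num
  have hdist : dist (rep (p 0)) (rep (p n))
      ≤ ∑ i ∈ Finset.range n, cellDist code (p i) (p (i + 1)) + 2 * σ * J := by
    refine (dist_le_range_sum_dist (rep ∘ p) n).trans ?_
    rw [Finset.mul_sum, ← Finset.sum_add_distrib]
    exact Finset.sum_le_sum fun i _ => dist_le_cellDist_add hcode hdiam hrep _ _
  have hsub : (∑ i ∈ Finset.range n, cellDist code (p i) (p (i + 1)) + 2 * σ * J) ^ α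
      ≤ W + (2 * σ * J) ^ α :=
    (Real.rpow_add_le_add_rpow (Finset.sum_nonneg fun _ _ => cellDist_nonneg _ _)
      (by positivity) hα0.le hα1.le).trans
      (add_le_add_left (rpow_sum_le_sum_rpow _ (fun _ _ => cellDist_nonneg _ _) hα0 hα1.le) _)
  have hjumps : γ ^ α * J ≤ W := by
    rw [Finset.mul_sum]
    exact Finset.sum_le_sum fun i _ =>
      rpow_mul_jump_le_cellDist hcode hγ.le hα0.le hgap _ _
  have hyoung : (2 * σ * J) ^ α ≤ K + η * γ ^ α * J :=
    rpow_mul_le_add_mul hα0 hα1 (by positivity) (by positivity) hsmall hJ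
  have hdiff : h (rep (p n)) - h (rep (p 0)) ≤ W + (2 * σ * J) ^ α := by
    refine (le_abs_self _).trans ((hh _ _).trans ((Real.rpow_le_rpow dist_nonneg ?_ hα0.le).trans
      hsub))
    rw [dist_comm]
    exact hdist
  -- shrinking by `1 - η` frees `η * W ≥ η * γ ^ α * J`, which pays for the jumps in `hyoung`
  have h1 := mul_le_mul_of_nonneg_left hdiff (sub_nonneg.2 hη1)
  have h2 : (1 - η) * (2 * σ * J) ^ α ≤ (2 * σ * J) ^ α :=
    mul_le_of_le_one_left (by positivity) (by linarith)
  have h3 := mul_le_mul_of_nonneg_left hjumps hη0.le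
  linarith

theorem exists_holder_near_of_partition (hcode : Surjective code) (hα0 : 0 < α)
    (hα1 : α < 1) (hσ : 0 ≤ σ) (hγ : 0 < γ) (hη0 : 0 < η) (hη1 : η ≤ 1)
    (hdiam : ∀ x y, code x = code y → dist x y ≤ σ)
    (hgap : ∀ x y, code x ≠ code y → γ ≤ dist x y)
    (hsmall : (2 * σ / (η * γ ^ α)) ^ (α / (1 - α)) ≤ K)
    {h : X → ℝ} (hh : ∀ x y, |h x - h y| ≤ dist x y ^ α) {M : ℝ} (hM : ∀ x, |h x| ≤ M) :
    ∃ v : τ → ℝ, (∀ x y, |v (code x) - v (code y)| ≤ dist x y ^ α) ∧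
      ∀ x, |v (code x) - h x| ≤ K + η * M + σ ^ α := by
  obtain ⟨rep, hrep⟩ := hcode.hasRightInverse
  obtain ⟨v, hva, hvw⟩ := exists_majorant_of_path_bound (fun C C' => cellDist code C C' ^ α)
    (fun C => (1 - η) * h (rep C))
    (path_bound_of_holder hcode hα0 hα1 hσ hγ hη0 hη1 hdiam hgap hsmall hh hrep)
  have hw : ∀ x y, cellDist code (code x) (code y) ^ α ≤ dist x y ^ α := fun x y =>
    Real.rpow_le_rpow (cellDist_nonneg _ _) (cellDist_le_dist x y) hα0.le
  refine ⟨v, fun x y => abs_sub_le_iff.2 ⟨?_, ?_⟩, fun x => ?_⟩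
  · have hyx := hw y x
    rw [dist_comm] at hyx
    linarith [hvw (code y) (code x)]
  · linarith [hvw (code x) (code y), hw x y]
  have hrepx : |h (rep (code x)) - h x| ≤ σ ^ α :=
    (hh _ _).trans (Real.rpow_le_rpow dist_nonneg (hdiam _ _ (hrep _)) hα0.le)
  have hshrink : |η * h (rep (code x))| ≤ η * M := by
    rw [abs_mul, abs_of_pos hη0]
    exact mul_le_mul_of_nonneg_left (hM _) hη0.le
  obtain ⟨hva1, hva2⟩ := hva (code x)
  rw [abs_le] at hrepx hshrink ⊢
  constructor <;> linarith [hrepx.1, hrepx.2, hshrink.1, hshrink.2]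

end CoarsePartition

lemma exists_pos_lt_one_le {ι : Type*} [Finite ι] {ν : ι → ℝ} (hν : ∀ i, 0 < ν i) :
    ∃ c, 0 < c ∧ c < 1 ∧ ∀ i, c ≤ ν i := by
  have h : ∀ᶠ c in 𝓝[>] (0 : ℝ), (0 < c ∧ c < 1) ∧ ∀ i, c ≤ ν i :=
    (eventually_mem_nhdsWithin.and (nhdsWithin_le_nhds (eventually_lt_nhds one_pos))).and
      (eventually_all.2 fun i => nhdsWithin_le_nhds
        ((eventually_lt_nhds (hν i)).mono fun _ => le_of_lt))
  obtain ⟨c, ⟨hc0, hc1⟩, hc⟩ := h.exists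
  exact ⟨c, hc0, hc1, hc⟩

lemma exists_pos_le_dist_of_pairwise_disjoint {E ι : Type*} [MetricSpace E] [Finite ι]
    {K : ι → Set E} (hK : ∀ i, IsCompact (K i)) (hdisj : Pairwise (Disjoint on K)) :
    ∃ δ > 0, ∀ i j, i ≠ j → ∀ x ∈ K i, ∀ y ∈ K j, δ ≤ dist x y := by
  have hpair : ∀ q : ι × ι, ∀ᶠ δ in 𝓝[>] (0 : ℝ),
      q.1 ≠ q.2 → ∀ x ∈ K q.1, ∀ y ∈ K q.2, δ ≤ dist x y := by
    rintro ⟨i, j⟩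
    by_cases hij : i = j
    · exact .of_forall fun _ h => (h hij).elim
    obtain ⟨d, hd, hKd⟩ := (hdisj hij).exists_thickenings (hK i) (hK j).isClosed
    filter_upwards [Ioc_mem_nhdsGT hd] with δ hδ _ x hx y hy
    by_contra! hlt
    refine disjoint_left.1 hKd (Metric.mem_thickening_iff.2 ⟨x, hx, ?_⟩)
      (Metric.self_subset_thickening hd _ hy)
    rw [dist_comm]
    linarith [hδ.2]
  obtain ⟨δ, hδ, hδ0⟩ := ((eventually_all.2 hpair).and eventually_mem_nhdsWithin).exists
  exact ⟨δ, hδ0, fun i j hij => hδ (i, j) hij⟩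

/-- `code x` is a level-`k` address of `x`: the indices of the first `k` maps of the system
through which `x` is reached from `F`. -/
lemma exists_address {E ι : Type*} [PseudoMetricSpace E] {f : ι → E → E} {F : Set E}
    {ν ρ δ D : ℝ} (hcover : F ⊆ ⋃ i, f i '' F) (hν0 : 0 ≤ ν) (hν1 : ν ≤ 1) (hρ0 : 0 ≤ ρ)
    (hδ : 0 ≤ δ) (hν : ∀ i x y, ν * dist x y ≤ dist (f i x) (f i y))
    (hρ : ∀ i x y, dist (f i x) (f i y) ≤ ρ * dist x y)
    (hsep : ∀ i j, i ≠ j → ∀ x ∈ f i '' F, ∀ y ∈ f j '' F, δ ≤ dist x y)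
    (hD : ∀ x ∈ F, ∀ y ∈ F, dist x y ≤ D) (k : ℕ) :
    ∃ code : F → (Fin k → ι), ∀ x y : F,
      (code x = code y → dist x y ≤ ρ ^ k * D) ∧ (code x ≠ code y → ν ^ k * δ ≤ dist x y) := by
  have hshift : ∀ x : F, ∃ i, ∃ y : F, f i y = x := fun x => by
    obtain ⟨i, y, hy, hyx⟩ := mem_iUnion.1 (hcover x.2)
    exact ⟨i, ⟨y, hy⟩, hyx⟩
  choose idx shift hshift using hshift
  have hmem : ∀ x : F, (x : E) ∈ f (idx x) '' F := fun x => ⟨shift x, (shift x).2, hshift x⟩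
  induction k with
  | zero =>
    refine ⟨fun _ => Fin.elim0, fun x y =>
      ⟨fun _ => ?_, fun hne => (hne (Subsingleton.elim _ _)).elim⟩⟩
    simpa [Subtype.dist_eq] using hD x x.2 y y.2
  | succ k ih =>
    obtain ⟨code, hcode⟩ := ih
    refine ⟨fun x => Fin.cons (idx x) (code (shift x)),
      fun x y => ⟨fun heq => ?_, fun hne => ?_⟩⟩
    · obtain ⟨hi, hc⟩ := Fin.cons_inj.1 heq
      rw [Subtype.dist_eq, ← hshift x, ← hshift y, hi]
      calc dist (f (idx y) (shift x)) (f (idx y) (shift y)) ≤ ρ * dist (shift x) (shift y) :=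
            hρ _ _ _
        _ ≤ ρ * (ρ ^ k * D) := mul_le_mul_of_nonneg_left ((hcode _ _).1 hc) hρ0
        _ = ρ ^ (k + 1) * D := by ring
    by_cases hi : idx x = idx y
    · have hc : code (shift x) ≠ code (shift y) := fun hc => hne (by simp only [hi, hc])
      rw [Subtype.dist_eq, ← hshift x, ← hshift y, hi]
      calc ν ^ (k + 1) * δ = ν * (ν ^ k * δ) := by ring
        _ ≤ ν * dist (shift x) (shift y) := mul_le_mul_of_nonneg_left ((hcode _ _).2 hc) hν0
        _ ≤ dist (f (idx y) (shift x)) (f (idx y) (shift y)) := hν _ _ _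
    · calc ν ^ (k + 1) * δ ≤ 1 * δ := mul_le_mul_of_nonneg_right (pow_le_one₀ hν0 hν1) hδ
        _ ≤ dist x y := (one_mul δ).symm ▸ hsep _ _ hi _ (hmem x) _ (hmem y)

lemma continuous_comp_of_le_dist {X τ Y : Type*} [PseudoMetricSpace X] [TopologicalSpace Y]
    {code : X → τ} {γ : ℝ} (hγ : 0 < γ) (hgap : ∀ x y, code x ≠ code y → γ ≤ dist x y)
    (v : τ → Y) : Continuous (v ∘ code) :=
  continuous_iff_continuousAt.2 fun x => continuousAt_const.congr <|
    Metric.eventually_nhds_iff.2 ⟨γ, hγ, fun y hy => by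
      by_contra hne
      exact (hgap y x fun h => hne (by rw [comp_apply, h])).not_gt hy⟩

lemma lt_rpow_of_lt_log_div_log {ν ρ α : ℝ} (hν0 : 0 < ν) (hν1 : ν < 1) (hρ0 : 0 < ρ)
    (hα : α < Real.log ρ / Real.log ν) : ρ < ν ^ α :=
  (Real.lt_rpow_iff_log_lt hρ0 hν0).2 ((lt_div_iff_of_neg (Real.log_neg hν0 hν1)).1 hα)

lemma tendsto_partition_ratio {ν ρ δ D η α : ℝ} (hν0 : 0 < ν) (hρ0 : 0 ≤ ρ) (hδ : 0 < δ)
    (hαρ : ρ < ν ^ α) :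
    Tendsto (fun k : ℕ => 2 * (ρ ^ k * D) / (η * (ν ^ k * δ) ^ α)) atTop (𝓝 0) := by
  have hνα : 0 < ν ^ α := Real.rpow_pos_of_pos hν0 α
  have h : ∀ k : ℕ, 2 * (ρ ^ k * D) / (η * (ν ^ k * δ) ^ α)
      = 2 * D / (η * δ ^ α) * (ρ / ν ^ α) ^ k := fun k => by
    rw [Real.mul_rpow (pow_nonneg hν0.le k) hδ.le, ← Real.rpow_pow_comm hν0.le, div_pow]
    ring
  simpa [h] using (tendsto_pow_atTop_nhds_zero_of_lt_one (div_nonneg hρ0 hνα.le)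
    ((div_lt_one hνα).2 hαρ)).const_mul (2 * D / (η * δ ^ α))

lemma eventually_level_small {ν ρ δ D η α s K : ℝ} (hν0 : 0 < ν) (hν1 : ν ≤ 1) (hρ0 : 0 ≤ ρ)
    (hδ : 0 < δ) (hα0 : 0 < α) (hα1 : α < 1) (hαρ : ρ < ν ^ α) (hs : 0 < s) (hK : 0 < K) :
    ∀ᶠ k : ℕ in atTop, (ρ ^ k * D) ^ α < s ∧
      (2 * (ρ ^ k * D) / (η * (ν ^ k * δ) ^ α)) ^ (α / (1 - α)) < K := by
  have hρ1 : ρ < 1 := hαρ.trans_le (Real.rpow_le_one hν0.le hν1 hα0.le)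
  have hexp : 0 < α / (1 - α) := div_pos hα0 (sub_pos.2 hα1)
  have hdiam : Tendsto (fun k : ℕ => (ρ ^ k * D) ^ α) atTop (𝓝 0) := by
    simpa [Real.zero_rpow hα0.ne'] using
      ((tendsto_pow_atTop_nhds_zero_of_lt_one hρ0 hρ1).mul_const D).rpow_const (Or.inr hα0.le)
  have hratio : Tendsto (fun k : ℕ => (2 * (ρ ^ k * D) / (η * (ν ^ k * δ) ^ α)) ^
      (α / (1 - α))) atTop (𝓝 0) := by
    simpa [Real.zero_rpow hexp.ne'] using
      (tendsto_partition_ratio hν0 hρ0 hδ hαρ).rpow_const (Or.inr hexp.le)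
  exact (hdiam.eventually_lt_const hs).and (hratio.eventually_lt_const hK)

theorem dense_setOf_finite_range_holderBall {p : ℕ} {ι : Type*} [Finite ι]
    {f : ι → EuclideanSpace ℝ (Fin p) → EuclideanSpace ℝ (Fin p)}
    {F : Set (EuclideanSpace ℝ (Fin p))} {ν ρ α : ℝ} (hFc : IsCompact F)
    (hcover : F ⊆ ⋃ i, f i '' F) (hdisj : Pairwise (Disjoint on fun i => f i '' F))
    (hν0 : 0 < ν) (hν1 : ν ≤ 1) (hρ0 : 0 ≤ ρ)
    (hν : ∀ i x y, ν * dist x y ≤ dist (f i x) (f i y))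
    (hρ : ∀ i x y, dist (f i x) (f i y) ≤ ρ * dist x y)
    (hα0 : 0 < α) (hα1 : α < 1) (hαρ : ρ < ν ^ α) :
    Dense {g : HolderBall α F | (range (g : BoundedContinuousFunction F ℝ)).Finite} := by
  have : CompactSpace F := isCompact_iff_compactSpace.mp hFc
  have hfc : ∀ i, Continuous (f i) := fun i =>
    (LipschitzWith.of_dist_le_mul (K := ⟨ρ, hρ0⟩) fun x y => hρ i x y).continuous
  obtain ⟨δ, hδ, hsep⟩ :=
    exists_pos_le_dist_of_pairwise_disjoint (fun i => hFc.image (hfc i)) hdisj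
  set D := Metric.diam F
  have hD : ∀ x ∈ F, ∀ y ∈ F, dist x y ≤ D := fun x hx y hy =>
    Metric.dist_le_diam_of_mem hFc.isBounded hx hy
  refine Metric.dense_iff.2 fun h r hr => ?_
  set M := ‖(h : BoundedContinuousFunction F ℝ)‖
  set η := min (r / (8 * (M + 1))) 1
  have hM : 0 ≤ M := norm_nonneg _
  have hη0 : 0 < η := lt_min (by positivity) one_pos
  have hηM : η * M ≤ r / 8 := by
    calc η * M ≤ r / (8 * (M + 1)) * M := mul_le_mul_of_nonneg_right (min_le_left _ _) hM
      _ ≤ r / 8 := by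
        rw [div_mul_eq_mul_div, div_le_div_iff₀ (by positivity) (by positivity)]
        nlinarith
  obtain ⟨k, hkdiam, hkratio⟩ := (eventually_level_small (D := D) (η := η) hν0 hν1 hρ0 hδ hα0
    hα1 hαρ (by positivity : 0 < r / 8) (by positivity : 0 < r / 4)).exists
  obtain ⟨code, hcode⟩ := exists_address hcover hν0.le hν1 hρ0 hδ.le hν hρ hsep hD k
  set c := rangeFactorization code
  have hdiam : ∀ x y, c x = c y → dist x y ≤ ρ ^ k * D := fun x y hxy =>
    (hcode x y).1 (congrArg Subtype.val hxy)
  have hgap : ∀ x y, c x ≠ c y → ν ^ k * δ ≤ dist x y := fun x y hxy =>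
    (hcode x y).2 fun h => hxy (Subtype.ext h)
  obtain ⟨v, hvhol, hvnear⟩ := exists_holder_near_of_partition rangeFactorization_surjective
    hα0 hα1 (by positivity) (by positivity) hη0 (min_le_right _ _) hdiam hgap hkratio.le h.2
    (M := M) fun x =>
      (Real.norm_eq_abs _).symm.trans_le (BoundedContinuousFunction.norm_coe_le_norm _ x)
  let g : BoundedContinuousFunction F ℝ :=
    .mkOfCompact ⟨v ∘ c, continuous_comp_of_le_dist (by positivity) hgap v⟩
  refine ⟨⟨g, hvhol⟩, ?_, (finite_range v).subset (range_comp_subset_range c v)⟩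
  rw [Metric.mem_ball, Subtype.dist_eq]
  refine ((BoundedContinuousFunction.dist_le (by positivity)).2 fun x => ?_).trans_lt
    (half_lt_self hr)
  change |v (c x) - (h : BoundedContinuousFunction F ℝ) x| ≤ r / 2
  linarith [hvnear x]

theorem stmt11_general {p : ℕ} (m : ℕ)
    (f : Fin m → EuclideanSpace ℝ (Fin p) → EuclideanSpace ℝ (Fin p))
    (ν ρ : Fin m → ℝ)
    (hν : ∀ i, 0 < ν i ∧ ν i < 1) (hρ : ∀ i, 0 < ρ i ∧ ρ i < 1)
    (hbl : ∀ i, ∀ x y, ν i * dist x y ≤ dist (f i x) (f i y) ∧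
      dist (f i x) (f i y) ≤ ρ i * dist x y)
    (F : Set (EuclideanSpace ℝ (Fin p))) (hFc : IsCompact F)
    (hinv : F = ⋃ i, f i '' F)
    (hssc : ∀ i j, i ≠ j → Disjoint (f i '' F) (f j '' F)) :
    ∃ α₀ : ℝ, 0 < α₀ ∧ ∀ α : ℝ, 0 < α → α < α₀ →
      (∃ G : Set ↥(HolderBall α F), Dense G ∧ IsGδ G ∧
        ∀ g ∈ G, volume (Set.range
          ⇑((g : ↥(HolderBall α F)) : BoundedContinuousFunction ↥F ℝ)) = 0) ∧
      DStar α F = 0 := by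
  obtain ⟨ν₀, hν₀0, hν₀1, hν₀⟩ := exists_pos_lt_one_le fun i => (hν i).1
  obtain ⟨c, hc0, hc1, hc⟩ := exists_pos_lt_one_le fun i => sub_pos.2 (hρ i).2
  have hν' : ∀ i x y, ν₀ * dist x y ≤ dist (f i x) (f i y) := fun i x y =>
    (mul_le_mul_of_nonneg_right (hν₀ i) dist_nonneg).trans (hbl i x y).1
  have hρ' : ∀ i x y, dist (f i x) (f i y) ≤ (1 - c) * dist x y := fun i x y =>
    (hbl i x y).2.trans (mul_le_mul_of_nonneg_right (by linarith [hc i]) dist_nonneg)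
  refine ⟨min (Real.log (1 - c) / Real.log ν₀) 1, lt_min (div_pos_of_neg_of_neg
    (Real.log_neg (by linarith) (by linarith)) (Real.log_neg hν₀0 hν₀1)) one_pos,
    fun α hα0 hα => ?_⟩
  have : CompactSpace F := isCompact_iff_compactSpace.mp hFc
  have hdense := dense_setOf_finite_range_holderBall hFc hinv.subset (fun i j => hssc i j)
    hν₀0 hν₀1.le (by linarith) hν' hρ' hα0 (hα.trans_le (min_le_right _ _))
    (lt_rpow_of_lt_log_div_log hν₀0 hν₀1 (by linarith) (hα.trans_le (min_le_left _ _)))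
  set G := {g : HolderBall α F | volume (range (g : BoundedContinuousFunction F ℝ)) = 0}
  have hGd : Dense G := hdense.mono fun g hg => hg.measure_zero volume
  have hGδ : IsGδ G := isGδ_setOf_volume_range_eq_zero.preimage continuous_subtype_val
  exact ⟨⟨G, hGd, hGδ, fun g hg => hg⟩, dStar_eq_zero_of_dense_isGδ hGd hGδ fun g hg =>
    dstarF_eq_zero_of_volume_range_eq_zero _ hg⟩

/-- If `F` is the attractor of a bi-Lipschitz IFS on `ℝ^p`
satisfying  the strong separation condition, then there is `α₀ > 0` such that for
every `0 < α < α₀` there is a dense Gδ subset `𝒢` of `C₁^α(F)` on which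
`λ(f(F)) = 0` for every `f ∈ 𝒢`, and `D_*(α, F) = 0`. -/
theorem stmt11 {p : ℕ} (m : ℕ) (hm : 0 < m)
    (f : Fin m → EuclideanSpace ℝ (Fin p) → EuclideanSpace ℝ (Fin p))
    (ν ρ : Fin m → ℝ)
    (hν : ∀ i, 0 < ν i ∧ ν i < 1) (hρ : ∀ i, 0 < ρ i ∧ ρ i < 1)
    (hbl : ∀ i, ∀ x y, ν i * dist x y ≤ dist (f i x) (f i y) ∧
      dist (f i x) (f i y) ≤ ρ i * dist x y)
    (F : Set (EuclideanSpace ℝ (Fin p))) (hFne : F.Nonempty) (hFc : IsCompact F)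
    (hinv : F = ⋃ i, f i '' F)
    (hssc : ∀ i j, i ≠ j → Disjoint (f i '' F) (f j '' F)) :
    ∃ α₀ : ℝ, 0 < α₀ ∧ ∀ α : ℝ, 0 < α → α < α₀ →
      (∃ G : Set ↥(HolderBall α F), Dense G ∧ IsGδ G ∧
        ∀ g ∈ G, volume (Set.range
          ⇑((g : ↥(HolderBall α F)) : BoundedContinuousFunction ↥F ℝ)) = 0) ∧
      DStar α F = 0 :=
  stmt11_general m f ν ρ hν hρ hbl F hFc hinv hssc
end
end
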